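/- As z → -∞, the Fermi integral satisfies φ_k(z)/e^z → 1, i.e., the Fermi–Dirac integral is asymptotic to the Maxwell–Boltzmann approximation e^z for large negative chemical potential. -/

import Mathlib

open MeasureTheory Real Filter Set

lemma fermi_aux (k : ℝ) (hk : 0 < k) :
    Tendsto (fun z : ℝ => ∫ t in Set.Ioi (0 : ℝ), t ^ (k - 1) / (Real.exp t + Real.exp z))
      atBot (nhds (Real.Gamma k)) := by
  have hΓ : Real.Gamma k = ∫ t in Set.Ioi (0:ℝ), t ^ (k-1) / Real.exp t := by
    rw [Real.Gamma_eq_integral hk]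
    refine setIntegral_congr_fun measurableSet_Ioi (fun t ht => ?_)
    rw [div_eq_mul_inv, ← Real.exp_neg, mul_comm]
  rw [hΓ]
  have hbound : Integrable (fun t => t ^ (k-1) / Real.exp t)
      (volume.restrict (Set.Ioi (0:ℝ))) := by
    have := Real.GammaIntegral_convergent hk
    refine this.congr_fun (fun t ht => ?_) measurableSet_Ioi
    rw [div_eq_mul_inv, ← Real.exp_neg, mul_comm]
  refine tendsto_integral_filter_of_dominated_convergence _ ?_ ?_ hbound ?_
  · filter_upwards with z
    refine ContinuousOn.aestronglyMeasurable ?_ measurableSet_Ioi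
    refine ContinuousOn.div
      (continuousOn_id.rpow_const (fun t ht => Or.inl (ne_of_gt ht)))
      ((Real.continuous_exp.continuousOn).add continuousOn_const)
      (fun t _ => by positivity)
  · filter_upwards with z
    filter_upwards [ae_restrict_mem measurableSet_Ioi] with t ht
    have ht' : (0:ℝ) < t := ht
    rw [Real.norm_eq_abs, abs_of_nonneg (by positivity)]
    apply div_le_div_of_nonneg_left (by positivity) (Real.exp_pos t)
    linarith [Real.exp_pos z]
  · filter_upwards [ae_restrict_mem measurableSet_Ioi] with t ht
    exact Tendsto.div tendsto_const_nhds
      (by simpa using tendsto_const_nhds.add Real.tendsto_exp_atBot)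
      (Real.exp_ne_zero t)

/-- As `z → -∞`, `φ_k(z) e^{-z} → 1`: the Fermi integral is asymptotic to the
Maxwell-Boltzmann approximation `e^z`. -/
theorem fermi_integral_maxwell_boltzmann (k : ℝ) (hk : 0 < k) :
    Filter.Tendsto
      (fun z : ℝ =>
        ((1 / Real.Gamma k) *
          ∫ t in Set.Ioi (0 : ℝ), t ^ (k - 1) / (Real.exp (t - z) + 1)) *
          Real.exp (-z))
      Filter.atBot (nhds 1) := by
  have hΓ0 : Real.Gamma k ≠ 0 := (Real.Gamma_pos_of_pos hk).ne'
  have key : ∀ z : ℝ,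
      ((1 / Real.Gamma k) *
          ∫ t in Set.Ioi (0 : ℝ), t ^ (k - 1) / (Real.exp (t - z) + 1)) *
          Real.exp (-z)
      = (1 / Real.Gamma k) *
          ∫ t in Set.Ioi (0 : ℝ), t ^ (k - 1) / (Real.exp t + Real.exp z) := by
    intro z
    rw [mul_assoc, mul_comm (∫ t in Set.Ioi (0:ℝ), t ^ (k-1) / (Real.exp (t-z) + 1)),
      ← MeasureTheory.integral_const_mul]
    congr 1
    refine setIntegral_congr_fun measurableSet_Ioi (fun t ht => ?_)
    have h1 : Real.exp (t - z) + 1 ≠ 0 := by positivity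
    have h2 : Real.exp t + Real.exp z ≠ 0 := by positivity
    field_simp [Real.exp_sub, Real.exp_neg]
    have h3 : Real.exp (-z) * Real.exp z = 1 := by rw [← Real.exp_add]; simp
    have h4 : Real.exp (t - z) = Real.exp t * Real.exp (-z) := by rw [sub_eq_add_neg, Real.exp_add]
    rw [h4]
    linear_combination t ^ (k - 1) * h3
  simp only [key]
  have := (fermi_aux k hk).const_mul (1 / Real.Gamma k)
  simpa [one_div, inv_mul_cancel₀ hΓ0] using this
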